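/- arXiv:2405.00171 — 2 statements merged into one kernel-verified Lean document; each statement's English description precedes it below -/
import Mathlib

section
/- Let n ≥ 2, let A = K[x]/(x^{n+1}) with maximal ideal m = (x), and let U ⊆ m be a K-linear subspace with dim_K U = n−1 and x^n ∉ U. Then there exists a K-algebra automorphism φ of A such that φ(U) = span_K{x, x², …, x^{n−1}}. -/
/-- The truncated polynomial algebra `K[x]/(x^{n+1})`. -/
abbrev TruncPoly (K : Type*) [Field K] (n : ℕ) : Type _ :=
  Polynomial K ⧸ Ideal.span {(Polynomial.X : Polynomial K) ^ (n + 1)}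

/-- The image of `x` in `K[x]/(x^{n+1})`. -/
noncomputable abbrev truncX (K : Type*) [Field K] (n : ℕ) : TruncPoly K n :=
  Ideal.Quotient.mk (Ideal.span {(Polynomial.X : Polynomial K) ^ (n + 1)}) Polynomial.X

/-!
Since `x^n ∉ U` and `dim U = n - 1 = dim m - 1`, we have `m = U ⊕ K x^n`, so for every
`1 ≤ r < n` some `x^r + c x^n` lies in `U`. The substitution `x ↦ x (1 - (c / r) x^(n-r))` is an
automorphism which preserves `m`, fixes `x^i` for `i > r` (in particular `x^n`) and sends
`x^r + c x^n` to `x^r`. Applying such substitutions for `r = n - 1, …, 1` moves `U` onto a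
subspace containing `x, …, x^(n-1)`, which is their span by dimension count.
-/

open Module

theorem Submodule.exists_add_smul_mem_of_finrank_le {K V : Type*} [DivisionRing K]
    [AddCommGroup V] [Module K V] {W M : Submodule K V} [FiniteDimensional K M] (hWM : W ≤ M)
    {v : V} (hvM : v ∈ M) (hvW : v ∉ W) (hM : finrank K M ≤ finrank K W + 1) {u : V}
    (hu : u ∈ M) : ∃ c : K, u + c • v ∈ W := by
  have hle : K ∙ v ⊔ W ≤ M := sup_le ((span_singleton_le_iff_mem v M).mpr hvM) hWM
  have : FiniteDimensional K ↥(K ∙ v ⊔ W) := Submodule.finiteDimensional_of_le hle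
  have hlt : finrank K W < finrank K ↥(K ∙ v ⊔ W) :=
    Submodule.finrank_lt_finrank_of_lt (covBy_span_singleton_sup hvW).lt
  have heq : K ∙ v ⊔ W = M := Submodule.eq_of_le_of_finrank_le hle (by omega)
  rw [← heq, ← W.span_eq, ← span_insert] at hu
  simpa using mem_span_insert'.mp hu

theorem mul_one_add_pow_of_mul_sq_eq_zero {R : Type*} [CommRing R] {e z : R}
    (h : e * z ^ 2 = 0) (m : ℕ) : e * (1 + z) ^ m = e * (1 + m * z) := by
  induction m with
  | zero => simp
  | succ m ih =>
    rw [pow_succ, ← mul_assoc, ih]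
    push_cast
    linear_combination (m : R) * h

namespace TruncPoly

variable {K : Type*} [Field K] {n : ℕ}

theorem truncX_pow_eq_zero {s : ℕ} (hs : n + 1 ≤ s) : truncX K n ^ s = 0 := by
  obtain ⟨e, rfl⟩ := Nat.exists_eq_add_of_le hs
  rw [pow_add, ← map_pow,
    Ideal.Quotient.eq_zero_iff_mem.mpr (Ideal.subset_span (Set.mem_singleton _)), zero_mul]

variable (K n) in
noncomputable def powerBasis : PowerBasis K (TruncPoly K n) :=
  AdjoinRoot.powerBasis (pow_ne_zero _ Polynomial.X_ne_zero)

theorem powerBasis_dim : (powerBasis K n).dim = n + 1 := by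
  simp [powerBasis]

theorem powerBasis_basis_apply (i : Fin (powerBasis K n).dim) :
    (powerBasis K n).basis i = truncX K n ^ (i : ℕ) := by
  rw [PowerBasis.coe_basis]
  rfl

instance : Module.Finite K (TruncPoly K n) :=
  (powerBasis K n).finite

theorem linearIndepOn_truncX_pow : LinearIndepOn K (truncX K n ^ ·) (Set.Iic n) := by
  have hinj : Function.Injective fun j : Set.Iic n =>
      (⟨j, by rw [powerBasis_dim]; exact Nat.lt_succ_of_le j.2⟩ : Fin (powerBasis K n).dim) :=
    fun a b h => Subtype.ext (congrArg Fin.val h)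
  have h := (powerBasis K n).basis.linearIndependent.comp _ hinj
  rwa [show ⇑(powerBasis K n).basis ∘ _ = fun j : Set.Iic n => truncX K n ^ (j : ℕ) from
    funext fun j => powerBasis_basis_apply _] at h

theorem finrank_span_truncX_pow_Icc {m : ℕ} (hm : m ≤ n) :
    finrank K (Submodule.span K ((truncX K n ^ ·) '' {j : ℕ | 1 ≤ j ∧ j ≤ m})) = m := by
  apply finrank_eq_of_rank_eq
  rw [← Cardinal.toENat_eq_natCast,
    toENat_rank_span_set (linearIndepOn_truncX_pow.mono fun j hj => hj.2.trans hm)]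
  rw [show {j : ℕ | 1 ≤ j ∧ j ≤ m} = ↑(Finset.Icc 1 m) by simp [Set.Icc_def],
    Set.encard_coe_eq_coe_finsetCard]
  simp

theorem truncX_pow_mul_mem (S : Submodule K (TruncPoly K n)) {s : ℕ}
    (hS : ∀ i, s ≤ i → i ≤ n → truncX K n ^ i ∈ S) (b : TruncPoly K n) :
    truncX K n ^ s * b ∈ S := by
  rw [← (powerBasis K n).basis.sum_repr b, Finset.mul_sum]
  refine Submodule.sum_mem _ fun i _ => ?_
  rw [mul_smul_comm, powerBasis_basis_apply, ← pow_add]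
  refine Submodule.smul_mem _ _ ?_
  by_cases hi : s + i ≤ n
  · exact hS _ (by omega) hi
  · rw [truncX_pow_eq_zero (by omega)]
    exact S.zero_mem

theorem finrank_ideal_span_truncX_le :
    finrank K ((Ideal.span {truncX K n}).restrictScalars K) ≤ n := by
  set S := Submodule.span K (Set.range fun i : Fin n => truncX K n ^ ((i : ℕ) + 1))
  have hle : (Ideal.span {truncX K n}).restrictScalars K ≤ S := by
    intro b hb
    obtain ⟨c, rfl⟩ := Ideal.mem_span_singleton'.mp hb
    have := truncX_pow_mul_mem S (s := 1) (fun i hi hin => Submodule.subset_span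
      (Set.mem_range.mpr ⟨⟨i - 1, by omega⟩, by simp only [Nat.sub_add_cancel hi]⟩)) c
    rwa [pow_one, mul_comm] at this
  exact (Submodule.finrank_mono hle).trans
    ((finrank_range_le_card _).trans (Fintype.card_fin n).le)

variable (K n) in
noncomputable def substMulOneAdd (z : TruncPoly K n) : TruncPoly K n →ₐ[K] TruncPoly K n :=
  AdjoinRoot.liftAlgHom _ (Algebra.ofId K _) (truncX K n * (1 + z)) <| by
    rw [Polynomial.eval₂_X_pow, mul_pow, truncX_pow_eq_zero le_rfl, zero_mul]

theorem substMulOneAdd_truncX_pow (z : TruncPoly K n) (i : ℕ) :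
    substMulOneAdd K n z (truncX K n ^ i) = truncX K n ^ i * (1 + z) ^ i := by
  rw [map_pow, ← mul_pow]
  exact congrArg (· ^ i) (AdjoinRoot.liftAlgHom_root _ _ _ _)

theorem truncX_dvd_substMulOneAdd (z : TruncPoly K n) {b : TruncPoly K n}
    (hb : truncX K n ∣ b) : truncX K n ∣ substMulOneAdd K n z b := by
  refine dvd_trans ?_ (map_dvd _ hb)
  simpa only [pow_one] using Dvd.intro _ (substMulOneAdd_truncX_pow z 1).symm

theorem substMulOneAdd_surjective {z : TruncPoly K n} (hz : truncX K n ∣ z) :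
    Function.Surjective (substMulOneAdd K n z) := by
  set R := Subalgebra.toSubmodule (substMulOneAdd K n z).range
  -- The image of `x^j` is `x^j` modulo `x^(j+1)`: downward induction on `j`.
  have hpow : ∀ d j, n + 1 ≤ j + d → truncX K n ^ j ∈ R := by
    intro d
    induction d with
    | zero => intro j hj; rw [truncX_pow_eq_zero (by omega)]; exact R.zero_mem
    | succ d ih =>
      intro j hj
      obtain ⟨w, hw⟩ : truncX K n ^ (j + 1) ∣
          substMulOneAdd K n z (truncX K n ^ j) - truncX K n ^ j := by
        rw [substMulOneAdd_truncX_pow, ← mul_sub_one, pow_succ (truncX K n) j]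
        refine mul_dvd_mul_left _ (hz.trans ?_)
        simpa using sub_one_dvd_pow_sub_one (1 + z) j
      have hxj : truncX K n ^ j =
          substMulOneAdd K n z (truncX K n ^ j) - truncX K n ^ (j + 1) * w := by
        rw [← hw]; ring
      rw [hxj]
      exact R.sub_mem ⟨_, rfl⟩ (truncX_pow_mul_mem R (fun i hi _ => ih i (by omega)) w)
  have hgen : Algebra.adjoin K {truncX K n} = ⊤ := AdjoinRoot.adjoinRoot_eq_top
  rw [← AlgHom.range_eq_top, eq_top_iff, ← hgen, Algebra.adjoin_le_iff,
    Set.singleton_subset_iff]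
  simpa [R] using hpow n 1 (by omega)

variable (K n) in
noncomputable def substMulOneAddEquiv (z : TruncPoly K n) (hz : truncX K n ∣ z) :
    TruncPoly K n ≃ₐ[K] TruncPoly K n :=
  AlgEquiv.ofBijective (substMulOneAdd K n z)
    ⟨LinearMap.injective_iff_surjective (f := (substMulOneAdd K n z).toLinearMap).mpr
      (substMulOneAdd_surjective hz),
      substMulOneAdd_surjective hz⟩

theorem substMulOneAddEquiv_apply (z : TruncPoly K n) (hz : truncX K n ∣ z)
    (b : TruncPoly K n) :
    substMulOneAddEquiv K n z hz b = substMulOneAdd K n z b :=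
  rfl

theorem substMulOneAdd_smul_truncX_pow_of_lt (a : K) {r i : ℕ} (hri : r < i) :
    substMulOneAdd K n (a • truncX K n ^ (n - r)) (truncX K n ^ i) = truncX K n ^ i := by
  have h0 : truncX K n ^ i * (a • truncX K n ^ (n - r)) = 0 := by
    rw [mul_smul_comm, ← pow_add, truncX_pow_eq_zero (by omega), smul_zero]
  rw [substMulOneAdd_truncX_pow,
    mul_one_add_pow_of_mul_sq_eq_zero (by rw [sq, ← mul_assoc, h0, zero_mul]), mul_add,
    mul_left_comm, h0, mul_zero, mul_one, add_zero]

theorem substMulOneAdd_smul_truncX_pow_self (a : K) {r : ℕ} (hr : r < n) :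
    substMulOneAdd K n (a • truncX K n ^ (n - r)) (truncX K n ^ r) =
      truncX K n ^ r + (r * a) • truncX K n ^ n := by
  have hsq : truncX K n ^ r * (a • truncX K n ^ (n - r)) ^ 2 = 0 := by
    rw [smul_pow, mul_smul_comm, ← pow_mul, ← pow_add, truncX_pow_eq_zero (by omega), smul_zero]
  rw [substMulOneAdd_truncX_pow, mul_one_add_pow_of_mul_sq_eq_zero hsq, mul_add, mul_one,
    mul_left_comm, mul_smul_comm, ← pow_add, Nat.add_sub_cancel' hr.le, mul_smul,
    ← nsmul_eq_mul, Nat.cast_smul_eq_nsmul]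

theorem exists_algEquiv_truncX_pow_mem_map [CharZero K] {r : ℕ} (hr : 0 < r) (hrn : r < n)
    {W : Submodule K (TruncPoly K n)} (hWm : W ≤ (Ideal.span {truncX K n}).restrictScalars K)
    (hWdim : finrank K W = n - 1) (hxn : truncX K n ^ n ∉ W)
    (hW : ∀ i, r < i → i < n → truncX K n ^ i ∈ W) :
    ∃ ψ : TruncPoly K n ≃ₐ[K] TruncPoly K n,
      W.map ψ.toLinearMap ≤ (Ideal.span {truncX K n}).restrictScalars K ∧
      truncX K n ^ n ∉ W.map ψ.toLinearMap ∧
      ∀ i, r ≤ i → i < n → truncX K n ^ i ∈ W.map ψ.toLinearMap := by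
  have hmem : ∀ {j}, 0 < j → truncX K n ^ j ∈ (Ideal.span {truncX K n}).restrictScalars K :=
    fun hj => Ideal.mem_span_singleton.mpr (dvd_pow_self _ hj.ne')
  obtain ⟨c, hc⟩ := Submodule.exists_add_smul_mem_of_finrank_le hWm (hmem (hr.trans hrn)) hxn
    (by rw [hWdim]; exact finrank_ideal_span_truncX_le.trans (by omega)) (hmem hr)
  -- `a = -c / r`, because the substitution below sends `x^r` to `x^r + r a x^n`
  have hz : truncX K n ∣ -(c / r) • truncX K n ^ (n - r) :=
    dvd_smul_of_dvd _ (dvd_pow_self _ (by omega))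
  set ψ := substMulOneAddEquiv K n _ hz
  have hfix : ∀ i, r < i → ψ (truncX K n ^ i) = truncX K n ^ i :=
    fun i hi => substMulOneAdd_smul_truncX_pow_of_lt _ hi
  have hψc : ψ (truncX K n ^ r + c • truncX K n ^ n) = truncX K n ^ r := by
    have hr0 : (r : K) ≠ 0 := Nat.cast_ne_zero.mpr hr.ne'
    rw [map_add, map_smul, hfix n hrn, substMulOneAddEquiv_apply,
      substMulOneAdd_smul_truncX_pow_self _ hrn, mul_neg, mul_div_cancel₀ c hr0, neg_smul,
      neg_add_cancel_right]
  refine ⟨ψ, ?_, ?_, ?_⟩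
  · rintro _ ⟨w, hw, rfl⟩
    exact Ideal.mem_span_singleton.mpr
      (truncX_dvd_substMulOneAdd _ (Ideal.mem_span_singleton.mp (hWm hw)))
  · rintro ⟨w, hw, hψw⟩
    exact hxn (ψ.injective (hψw.trans (hfix n hrn).symm) ▸ hw)
  · intro i hri hin
    rcases hri.eq_or_lt with rfl | hri
    · exact ⟨_, hc, hψc⟩
    · exact ⟨_, hW i hri hin, hfix i hri⟩

theorem exists_algEquiv_map_eq_span [CharZero K] (r : ℕ) (hrn : r < n)
    (W : Submodule K (TruncPoly K n)) (hWm : W ≤ (Ideal.span {truncX K n}).restrictScalars K)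
    (hWdim : finrank K W = n - 1) (hxn : truncX K n ^ n ∉ W)
    (hW : ∀ i, r < i → i < n → truncX K n ^ i ∈ W) :
    ∃ φ : TruncPoly K n ≃ₐ[K] TruncPoly K n,
      W.map φ.toLinearMap =
        Submodule.span K ((truncX K n ^ ·) '' {j : ℕ | 1 ≤ j ∧ j ≤ n - 1}) := by
  induction r generalizing W with
  | zero =>
    refine ⟨1, ?_⟩
    rw [AlgEquiv.one_toLinearMap, Module.End.one_eq_id, Submodule.map_id]
    refine (Submodule.eq_of_le_of_finrank_le ?_ ?_).symm
    · rw [Submodule.span_le]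
      rintro _ ⟨j, ⟨hj1, hjn⟩, rfl⟩
      exact hW j hj1 (by omega)
    · rw [hWdim, finrank_span_truncX_pow_Icc (by omega)]
  | succ r ih =>
    obtain ⟨ψ, hψm, hψxn, hψW⟩ :=
      exists_algEquiv_truncX_pow_mem_map r.succ_pos hrn hWm hWdim hxn hW
    obtain ⟨φ, hφ⟩ := ih (by omega) _ hψm
      (by rw [LinearEquiv.finrank_map_eq ψ.toLinearEquiv, hWdim]) hψxn hψW
    exact ⟨ψ.trans φ, by rw [← hφ, AlgEquiv.trans_toLinearMap, Submodule.map_comp]⟩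

end TruncPoly

set_option synthInstance.maxHeartbeats 1000000 in
set_option maxHeartbeats 2000000 in
theorem stmt_14_general (K : Type*) [Field K] [CharZero K]
    (n : ℕ) (hn : 2 ≤ n)
    (U : Submodule K (TruncPoly K n))
    (hUm : U ≤ (Ideal.span {truncX K n}).restrictScalars K)
    (hUdim : Module.finrank K U = n - 1)
    (hxn : truncX K n ^ n ∉ U) :
    ∃ φ : TruncPoly K n ≃ₐ[K] TruncPoly K n,
      U.map φ.toLinearMap = Submodule.span K
        ((fun j : ℕ => truncX K n ^ j) '' {j : ℕ | 1 ≤ j ∧ j ≤ n - 1}) :=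
  TruncPoly.exists_algEquiv_map_eq_span (n - 1) (by omega) U hUm hUdim hxn
    fun i hi hin => absurd hin (by omega)

set_option synthInstance.maxHeartbeats 1000000 in
set_option maxHeartbeats 2000000 in
/-- Let `n ≥ 2`, `A = K[x]/(x^{n+1})` with maximal ideal `m = (x)`, and
let `U ⊆ m` be a `K`-linear subspace with `dim_K U = n−1` and `x^n ∉ U`.  Then there exists
a `K`-algebra automorphism `φ` of `A` such that `φ(U) = span{x, x², …, x^{n−1}}`. -/
theorem stmt_14 (K : Type*) [Field K] [IsAlgClosed K] [CharZero K]
    (n : ℕ) (hn : 2 ≤ n)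
    (U : Submodule K (TruncPoly K n))
    (hUm : U ≤ (Ideal.span {truncX K n}).restrictScalars K)
    (hUdim : Module.finrank K U = n - 1)
    (hxn : truncX K n ^ n ∉ U) :
    ∃ φ : TruncPoly K n ≃ₐ[K] TruncPoly K n,
      U.map φ.toLinearMap = Submodule.span K
        ((fun j : ℕ => truncX K n ^ j) '' {j : ℕ | 1 ≤ j ∧ j ≤ n - 1}) :=
  stmt_14_general K n hn U hUm hUdim hxn
end

section
/- Let A = K[x,y]/(x², y²) with maximal ideal m = (x, y), and let W ⊆ m be a 2-dimensional K-linear subspace that generates A as a unital K-algebra. Then there exists a K-algebra automorphism φ of A such that φ(W) = span_K{x, y}. -/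
/-- The algebra `K[x,y]/(x², y²)`. -/
abbrev SqZero (K : Type*) [Field K] : Type _ :=
  MvPolynomial (Fin 2) K ⧸ Ideal.span
    {(MvPolynomial.X 0 : MvPolynomial (Fin 2) K) ^ 2,
      (MvPolynomial.X 1 : MvPolynomial (Fin 2) K) ^ 2}

/-- The image of `x` in `K[x,y]/(x², y²)`. -/
noncomputable abbrev sqX (K : Type*) [Field K] : SqZero K :=
  Ideal.Quotient.mk _ (MvPolynomial.X 0)

/-- The image of `y` in `K[x,y]/(x², y²)`. -/
noncomputable abbrev sqY (K : Type*) [Field K] : SqZero K :=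
  Ideal.Quotient.mk _ (MvPolynomial.X 1)

/-!
Every monomial of degree at least two in elements of `W ⊆ m` lies in `m²`, so if `W` generates
`A` then `W + m² = m`. Here `m² = K·xy`, so `W` contains `x - b·xy` and `y - c·xy` for some
`b, c`; as `xy ≠ 0` these are independent and hence span `W`. The shear automorphism
`x ↦ x + b·xy`, `y ↦ y + c·xy` sends them to `x` and `y`.
-/

lemma finrank_span_pair_eq_two {R M : Type*} [Ring R] [Nontrivial R] [StrongRankCondition R]
    [AddCommGroup M] [Module R M] {u v : M} (h : LinearIndependent R ![u, v]) :
    Module.finrank R (Submodule.span R {u, v}) = 2 := by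
  rw [← Matrix.range_cons_cons_empty u v ![], finrank_span_eq_card h, Fintype.card_fin]

section CotangentSpace

variable {R A : Type*} [CommRing A]

lemma exists_sub_algebraMap_mem_sup_sq_of_mem_adjoin [CommSemiring R] [Algebra R A]
    {I : Ideal A} {W : Submodule R A} (hWI : W ≤ I.restrictScalars R)
    {a : A} (ha : a ∈ Algebra.adjoin R (W : Set A)) :
    ∃ c : R, a - algebraMap R A c ∈ W ⊔ (I ^ 2).restrictScalars R := by
  have hle : W ⊔ (I ^ 2).restrictScalars R ≤ I.restrictScalars R :=
    sup_le hWI (Submodule.restrictScalars_mono R (Ideal.pow_le_self two_ne_zero))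
  induction ha using Algebra.adjoin_induction with
  | mem w hw => exact ⟨0, by simpa using Submodule.mem_sup_left hw⟩
  | algebraMap c => exact ⟨c, by simp⟩
  | add a b _ _ iha ihb =>
    obtain ⟨c, hc⟩ := iha
    obtain ⟨d, hd⟩ := ihb
    refine ⟨c + d, ?_⟩
    convert add_mem hc hd using 1
    rw [map_add]; ring
  | mul a b _ _ iha ihb =>
    obtain ⟨c, hc⟩ := iha
    obtain ⟨d, hd⟩ := ihb
    set s := a - algebraMap R A c
    set t := b - algebraMap R A d
    have hst : s * t ∈ W ⊔ (I ^ 2).restrictScalars R :=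
      Submodule.mem_sup_right (by rw [sq]; exact Ideal.mul_mem_mul (hle hc) (hle hd))
    refine ⟨c * d, ?_⟩
    have : a * b - algebraMap R A (c * d) = s * t + c • t + d • s := by
      simp only [s, t, map_mul, Algebra.smul_def]; ring
    rw [this]
    exact add_mem (add_mem hst (Submodule.smul_mem _ c hd)) (Submodule.smul_mem _ d hc)

lemma restrictScalars_le_sup_sq_of_adjoin_eq_top [Field R] [Algebra R A]
    {I : Ideal A} (hI : I ≠ ⊤) {W : Submodule R A} (hWI : W ≤ I.restrictScalars R)
    (hW : Algebra.adjoin R (W : Set A) = ⊤) :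
    I.restrictScalars R ≤ W ⊔ (I ^ 2).restrictScalars R := by
  intro a ha
  obtain ⟨c, hc⟩ := exists_sub_algebraMap_mem_sup_sq_of_mem_adjoin hWI (hW ▸ Algebra.mem_top)
  have hc0 : c = 0 := by
    by_contra hc0
    have hcI : algebraMap R A c ∈ I := by
      have hsI : a - algebraMap R A c ∈ I :=
        sup_le hWI (Submodule.restrictScalars_mono R (Ideal.pow_le_self two_ne_zero)) hc
      simpa using I.sub_mem ha hsI
    exact hI (I.eq_top_of_isUnit_mem hcI ((isUnit_iff_ne_zero.2 hc0).map _))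
  simpa [hc0] using hc

end CotangentSpace

namespace SqZero

section Generators

variable (K : Type*) [Field K]

lemma sqX_sq : sqX K ^ 2 = 0 :=
  (Ideal.Quotient.eq_zero_iff_mem).2 (Ideal.subset_span (Or.inl rfl))

lemma sqY_sq : sqY K ^ 2 = 0 :=
  (Ideal.Quotient.eq_zero_iff_mem).2 (Ideal.subset_span (Or.inr rfl))

lemma sqX_mul_sqX_mul_sqY : sqX K * (sqX K * sqY K) = 0 := by
  linear_combination sqY K * sqX_sq K

lemma sqY_mul_sqX_mul_sqY : sqY K * (sqX K * sqY K) = 0 := by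
  linear_combination sqX K * sqY_sq K

lemma adjoin_sqX_sqY : Algebra.adjoin K {sqX K, sqY K} = ⊤ := by
  have hrange : Set.range (MvPolynomial.X : Fin 2 → MvPolynomial (Fin 2) K) =
      {MvPolynomial.X 0, MvPolynomial.X 1} := by
    ext; simp [Fin.exists_fin_two, eq_comm]
  have himage : {sqX K, sqY K} = Ideal.Quotient.mkₐ K _ '' Set.range MvPolynomial.X := by
    rw [hrange, Set.image_pair]; rfl
  rw [himage, Algebra.adjoin_image, MvPolynomial.adjoin_range_X, Algebra.map_top,
    AlgHom.range_eq_top]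
  exact Ideal.Quotient.mkₐ_surjective K _

end Generators

section Lift

variable {K A : Type*} [Field K] [CommRing A] [Algebra K A]

lemma algHom_ext {f g : SqZero K →ₐ[K] A} (hx : f (sqX K) = g (sqX K))
    (hy : f (sqY K) = g (sqY K)) : f = g :=
  AlgHom.ext_of_adjoin_eq_top (adjoin_sqX_sqY K) fun _ h => by
    rcases h with rfl | rfl
    exacts [hx, hy]

noncomputable def lift (a b : A) (ha : a ^ 2 = 0) (hb : b ^ 2 = 0) : SqZero K →ₐ[K] A :=
  Ideal.Quotient.liftₐ _ (MvPolynomial.aeval ![a, b]) fun p hp => by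
    refine Submodule.span_induction ?_ ?_ ?_ ?_ hp
    · rintro q (rfl | rfl) <;> simp [ha, hb]
    · simp
    · intro p q _ _ hp hq; simp [hp, hq]
    · intro p q _ hq; simp [smul_eq_mul, hq]

lemma lift_mk (a b : A) (ha : a ^ 2 = 0) (hb : b ^ 2 = 0) (p : MvPolynomial (Fin 2) K) :
    lift a b ha hb (Ideal.Quotient.mk _ p) = MvPolynomial.aeval ![a, b] p :=
  rfl

@[simp] lemma lift_sqX (a b : A) (ha : a ^ 2 = 0) (hb : b ^ 2 = 0) :
    lift a b ha hb (sqX K) = a := by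
  simp [sqX, lift_mk]

@[simp] lemma lift_sqY (a b : A) (ha : a ^ 2 = 0) (hb : b ^ 2 = 0) :
    lift a b ha hb (sqY K) = b := by
  simp [sqY, lift_mk]

end Lift

section MaximalIdeal

variable (K : Type*) [Field K]

lemma sqX_mul_sqY_ne_zero : sqX K * sqY K ≠ 0 := by
  set ε' : DualNumber (DualNumber K) := algebraMap (DualNumber K) _ DualNumber.eps
  have hε' : ε' ^ 2 = 0 := by rw [← map_pow, DualNumber.eps_pow_two, map_zero]
  intro h
  have := congrArg (fun z => (lift DualNumber.eps ε' DualNumber.eps_pow_two hε' z).snd) h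
  simp only [ε', map_mul, lift_sqX, lift_sqY, TrivSqZeroExt.algebraMap_eq_inl] at this
  exact absurd (congrArg TrivSqZeroExt.snd this) (by simp)

lemma span_sqX_sqY_ne_top : Ideal.span {sqX K, sqY K} ≠ ⊤ := by
  intro h
  have hle : Ideal.span {sqX K, sqY K} ≤ RingHom.ker (lift (0 : K) 0 (by simp) (by simp)) := by
    rw [Ideal.span_le]
    rintro z (rfl | rfl) <;> simp
  exact RingHom.ker_ne_top _ (top_le_iff.1 (h ▸ hle))

lemma mul_sqX_mul_sqY_mem (a : SqZero K) : a * (sqX K * sqY K) ∈ K ∙ (sqX K * sqY K) := by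
  have ha : a ∈ Algebra.adjoin K {sqX K, sqY K} := adjoin_sqX_sqY K ▸ Algebra.mem_top
  simp only [Submodule.mem_span_singleton]
  induction ha using Algebra.adjoin_induction with
  | mem z hz =>
    refine ⟨0, ?_⟩
    rw [zero_smul]
    rcases hz with rfl | rfl
    exacts [(sqX_mul_sqX_mul_sqY K).symm, (sqY_mul_sqX_mul_sqY K).symm]
  | algebraMap c => exact ⟨c, by rw [Algebra.algebraMap_eq_smul_one, smul_mul_assoc, one_mul]⟩
  | add a b _ _ iha ihb =>
    obtain ⟨c, hc⟩ := iha
    obtain ⟨d, hd⟩ := ihb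
    exact ⟨c + d, by rw [add_smul, hc, hd, add_mul]⟩
  | mul a b _ _ iha ihb =>
    obtain ⟨c, hc⟩ := iha
    obtain ⟨d, hd⟩ := ihb
    exact ⟨d * c, by rw [mul_smul, hc, ← mul_smul_comm, hd, mul_assoc]⟩

lemma sq_span_sqX_sqY_le :
    (Ideal.span {sqX K, sqY K} ^ 2).restrictScalars K ≤ K ∙ (sqX K * sqY K) := by
  have hsq : Ideal.span {sqX K, sqY K} ^ 2 ≤ Ideal.span {sqX K * sqY K} := by
    rw [pow_two (Ideal.span {sqX K, sqY K}), Ideal.mul_le]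
    intro r hr s hs
    obtain ⟨a, b, rfl⟩ := Ideal.mem_span_pair.1 hr
    obtain ⟨c, d, rfl⟩ := Ideal.mem_span_pair.1 hs
    refine Ideal.mem_span_singleton'.2 ⟨a * d + b * c, ?_⟩
    linear_combination (-(a * c)) * sqX_sq K - b * d * sqY_sq K
  intro z hz
  obtain ⟨a, rfl⟩ := Ideal.mem_span_singleton'.1 (hsq hz)
  exact mul_sqX_mul_sqY_mem K a

end MaximalIdeal

section Shear

variable {K : Type*} [Field K]

lemma smul_eq_algebraMap_mul (c : K) (z : SqZero K) : c • z = algebraMap K _ c * z :=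
  Algebra.smul_def c z

lemma sq_add_smul_sqX_mul_sqY {z : SqZero K} (hz : z ^ 2 = 0) (hzxy : z * (sqX K * sqY K) = 0)
    (c : K) : (z + c • (sqX K * sqY K)) ^ 2 = 0 := by
  rw [smul_eq_algebraMap_mul]
  linear_combination hz + 2 * algebraMap K _ c * hzxy +
    (algebraMap K _ c) ^ 2 * sqY K ^ 2 * sqX_sq K

noncomputable def shearHom (s t : K) : SqZero K →ₐ[K] SqZero K :=
  lift (sqX K + s • (sqX K * sqY K)) (sqY K + t • (sqX K * sqY K))
    (sq_add_smul_sqX_mul_sqY (sqX_sq K) (sqX_mul_sqX_mul_sqY K) s)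
    (sq_add_smul_sqX_mul_sqY (sqY_sq K) (sqY_mul_sqX_mul_sqY K) t)

lemma shearHom_sqX (s t : K) : shearHom s t (sqX K) = sqX K + s • (sqX K * sqY K) :=
  lift_sqX ..

lemma shearHom_sqY (s t : K) : shearHom s t (sqY K) = sqY K + t • (sqX K * sqY K) :=
  lift_sqY ..

lemma shearHom_sqX_mul_sqY (s t : K) : shearHom s t (sqX K * sqY K) = sqX K * sqY K := by
  rw [map_mul, shearHom_sqX, shearHom_sqY, smul_eq_algebraMap_mul, smul_eq_algebraMap_mul]
  linear_combination (algebraMap K _ t + algebraMap K _ s * algebraMap K _ t * sqY K) *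
    sqX_mul_sqX_mul_sqY K + algebraMap K _ s * sqY_mul_sqX_mul_sqY K

lemma shearHom_comp_shearHom (s t s' t' : K) :
    (shearHom s t).comp (shearHom s' t') = shearHom (s + s') (t + t') := by
  refine algHom_ext ?_ ?_ <;>
    simp only [AlgHom.comp_apply, shearHom_sqX, shearHom_sqY, map_add, map_smul,
      shearHom_sqX_mul_sqY, add_smul, add_assoc]

lemma shearHom_zero : shearHom (0 : K) 0 = AlgHom.id K _ := by
  refine algHom_ext ?_ ?_ <;> simp [shearHom_sqX, shearHom_sqY]

noncomputable def shear (s t : K) : SqZero K ≃ₐ[K] SqZero K :=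
  AlgEquiv.ofAlgHom (shearHom s t) (shearHom (-s) (-t))
    (by rw [shearHom_comp_shearHom, add_neg_cancel, add_neg_cancel, shearHom_zero])
    (by rw [shearHom_comp_shearHom, neg_add_cancel, neg_add_cancel, shearHom_zero])

lemma shear_sqX_sub_smul (s t : K) : shear s t (sqX K - s • (sqX K * sqY K)) = sqX K := by
  rw [shear, AlgEquiv.ofAlgHom_apply, map_sub, map_smul, shearHom_sqX, shearHom_sqX_mul_sqY,
    add_sub_cancel_right]

lemma shear_sqY_sub_smul (s t : K) : shear s t (sqY K - t • (sqX K * sqY K)) = sqY K := by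
  rw [shear, AlgEquiv.ofAlgHom_apply, map_sub, map_smul, shearHom_sqY, shearHom_sqX_mul_sqY,
    add_sub_cancel_right]

lemma linearIndependent_sub_smul (b c : K) :
    LinearIndependent K ![sqX K - b • (sqX K * sqY K), sqY K - c • (sqX K * sqY K)] := by
  rw [LinearIndependent.pair_iff]
  intro s t h
  simp only [smul_eq_algebraMap_mul] at h
  set k := algebraMap K (SqZero K)
  -- multiplying the relation by `y`, resp. `x`, kills everything but `s·xy`, resp. `t·xy`
  have hs : k s * (sqX K * sqY K) = 0 := by
    linear_combination sqY K * h + (k s * k b + k t * k c) * sqY_mul_sqX_mul_sqY K -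
      k t * sqY_sq K
  have ht : k t * (sqX K * sqY K) = 0 := by
    linear_combination sqX K * h + (k s * k b + k t * k c) * sqX_mul_sqX_mul_sqY K -
      k s * sqX_sq K
  simp only [k, ← smul_eq_algebraMap_mul, smul_eq_zero, sqX_mul_sqY_ne_zero K, or_false] at hs ht
  exact ⟨hs, ht⟩

end Shear

end SqZero

theorem stmt_15_general (K : Type*) [Field K]
    (W : Submodule K (SqZero K))
    (hWm : W ≤ (Ideal.span {sqX K, sqY K}).restrictScalars K)
    (hWdim : Module.finrank K W = 2)
    (hgen : Algebra.adjoin K (W : Set (SqZero K)) = ⊤) :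
    ∃ φ : SqZero K ≃ₐ[K] SqZero K,
      W.map φ.toLinearMap = Submodule.span K {sqX K, sqY K} := by
  have hcot := restrictScalars_le_sup_sq_of_adjoin_eq_top (SqZero.span_sqX_sqY_ne_top K) hWm hgen
  have hlift : ∀ z ∈ Ideal.span {sqX K, sqY K}, ∃ b : K, z - b • (sqX K * sqY K) ∈ W := by
    intro z hz
    obtain ⟨w, hw, i, hi, rfl⟩ := Submodule.mem_sup.1 (hcot hz)
    obtain ⟨b, hb⟩ := Submodule.mem_span_singleton.1 (SqZero.sq_span_sqX_sqY_le K hi)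
    exact ⟨b, by rwa [← hb, add_sub_cancel_right]⟩
  obtain ⟨b, hb⟩ := hlift (sqX K) (Ideal.subset_span (by simp))
  obtain ⟨c, hc⟩ := hlift (sqY K) (Ideal.subset_span (by simp))
  have hW : Submodule.span K {sqX K - b • (sqX K * sqY K), sqY K - c • (sqX K * sqY K)} = W := by
    have : FiniteDimensional K W := Module.finite_of_finrank_eq_succ hWdim
    refine Submodule.eq_of_le_of_finrank_eq ?_ ?_
    · rw [Submodule.span_le]
      rintro z (rfl | rfl)
      exacts [hb, hc]
    · rw [hWdim, finrank_span_pair_eq_two (SqZero.linearIndependent_sub_smul b c)]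
  refine ⟨SqZero.shear b c, ?_⟩
  rw [← hW, Submodule.map_span, Set.image_pair]
  simp only [AlgEquiv.toLinearMap_apply, SqZero.shear_sqX_sub_smul, SqZero.shear_sqY_sub_smul]

set_option synthInstance.maxHeartbeats 1000000 in
set_option maxHeartbeats 2000000 in
/-- Let `A = K[x,y]/(x², y²)` with maximal ideal `m = (x, y)`, and let
`W ⊆ m` be a 2-dimensional `K`-linear subspace that generates `A` as a unital `K`-algebra.
Then there exists a `K`-algebra automorphism `φ` of `A` such that `φ(W) = span{x, y}`. -/
theorem stmt_15 (K : Type*) [Field K] [IsAlgClosed K] [CharZero K]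
    (W : Submodule K (SqZero K))
    (hWm : W ≤ (Ideal.span {sqX K, sqY K}).restrictScalars K)
    (hWdim : Module.finrank K W = 2)
    (hgen : Algebra.adjoin K (W : Set (SqZero K)) = ⊤) :
    ∃ φ : SqZero K ≃ₐ[K] SqZero K,
      W.map φ.toLinearMap = Submodule.span K {sqX K, sqY K} :=
  stmt_15_general K W hWm hWdim hgen
end
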